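/- arXiv:2208.10456 — 2 statements merged into one kernel-verified Lean document; each statement's English description precedes it below -/
import Mathlib

section
/- Existence of the core: let (Σ, ⊕, u) be a partial commutative monoid in which, for every state φ, the set {p ∈ Σ | p is pure and φ ⪰ p} is finite. Then every state φ has a maximum pure part: there exists a pure state |φ| with φ ⪰ |φ| such that |φ| ⪰ p for every pure state p with φ ⪰ p. -/
/-- A partial commutative monoid: `op` is a partial (Option-valued), commutative,
associative binary operation with neutral element `unit`. The `Option.bind`
formulation of associativity also entails that whenever a sum is defined,
so are all of its subsums. -/
structure PCM (S : Type*) where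
  op : S → S → Option S
  unit : S
  comm : ∀ a b, op a b = op b a
  assoc : ∀ a b c, (op a b).bind (fun ab => op ab c) = (op b c).bind (fun bc => op a bc)
  unit_op : ∀ a, op unit a = some a

namespace PCM

variable {S : Type*} (P : PCM S)

/-- `φ # φ'`: the sum is defined. -/
def compat (a b : S) : Prop := (P.op a b).isSome

/-- `b ⪰ a` : `b = a ⊕ c` for some `c`. -/
def succ (b a : S) : Prop := ∃ c, P.op a c = some b

/-- `p` is pure iff `p # p` and `p = p ⊕ p`. -/
def pure (p : S) : Prop := P.op p p = some p

/-- Lifted addition on sets of states. -/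
def setOp (T U : Set S) : Set S := {x | ∃ a ∈ T, ∃ b ∈ U, P.op a b = some x}

/-- Lifted order on sets of states: every element of `T` dominates some element of `U`. -/
def setSucc (T U : Set S) : Prop := ∀ a ∈ T, ∃ b ∈ U, P.succ a b

/-- Bounded (safety and output) monotonicity for a verifier `(ver, sem)` with
resource bound `T`. -/
def mono (ver : S → Prop) (sem : S → Set S) (T : Set S) : Prop :=
  ∀ φ₁ φ₂ : S, (∃ φ₃ ∈ T, P.succ φ₃ φ₂) → P.succ φ₂ φ₁ → ver φ₁ →
    ver φ₂ ∧ P.setSucc (sem φ₂) (sem φ₁)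

/-- Bounded framing for a verifier `(ver, sem)` with resource bound `T`. -/
def framing (ver : S → Prop) (sem : S → Set S) (T : Set S) : Prop :=
  ∀ φ r φr : S, P.op φ r = some φr → (∃ φ' ∈ T, P.succ φ' φr) → ver φ →
    ver φr ∧ P.setSucc (sem φr) (P.setOp (sem φ) {r})

end PCM

/-! A pure state `p` below `φ` absorbs it, `p ⊕ φ = φ`. Hence for two such `p`, `q`, the sum
`p ⊕ (q ⊕ φ) = φ` is defined, so `p ⊕ q` is defined, pure and still below `φ`; the sum of the
finitely many pure states below `φ` is then the maximum one. -/

namespace PCM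

variable {S : Type*} (P : PCM S)

lemma succ_trans {a b c : S} (hba : P.succ b a) (hcb : P.succ c b) : P.succ c a := by
  obtain ⟨x, hx⟩ := hba
  obtain ⟨y, hy⟩ := hcb
  have h := P.assoc a x y
  rw [hx, Option.bind_some, hy] at h
  obtain ⟨z, -, haz⟩ := Option.bind_eq_some_iff.mp h.symm
  exact ⟨z, haz⟩

lemma succ_unit (φ : S) : P.succ φ P.unit := ⟨φ, P.unit_op φ⟩

lemma pure_unit : P.pure P.unit := P.unit_op P.unit

lemma op_eq_self_of_pure_of_succ {p φ : S} (hp : P.pure p) (h : P.succ φ p) :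
    P.op p φ = some φ := by
  obtain ⟨a, ha⟩ := h
  have h := P.assoc p p a
  rw [hp, Option.bind_some, ha] at h
  simpa using h.symm

lemma exists_op_eq_of_pure_of_succ {p q φ : S} (hp : P.pure p) (hq : P.pure q)
    (hφp : P.succ φ p) (hφq : P.succ φ q) : ∃ r, P.op p q = some r ∧ P.succ φ r := by
  have h := P.assoc p q φ
  rw [P.op_eq_self_of_pure_of_succ hq hφq, Option.bind_some,
    P.op_eq_self_of_pure_of_succ hp hφp] at h
  obtain ⟨r, hpq, hrφ⟩ := Option.bind_eq_some_iff.mp h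
  exact ⟨r, hpq, φ, hrφ⟩

lemma pure_of_op_eq {p q r : S} (hp : P.pure p) (hq : P.pure q) (hpq : P.op p q = some r) :
    P.pure r := by
  have hpr := P.op_eq_self_of_pure_of_succ hp ⟨q, hpq⟩
  have hqr := P.op_eq_self_of_pure_of_succ hq ⟨p, P.comm q p ▸ hpq⟩
  have h := P.assoc p q r
  rwa [hpq, hqr, Option.bind_some, Option.bind_some, hpr] at h

lemma exists_pure_succ_forall_of_finite {φ : S} {T : Set S} (hT : T.Finite)
    (hTφ : ∀ p ∈ T, P.pure p ∧ P.succ φ p) :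
    ∃ c, P.pure c ∧ P.succ φ c ∧ ∀ p ∈ T, P.succ c p := by
  induction T, hT using Set.Finite.induction_on with
  | empty => exact ⟨P.unit, P.pure_unit, P.succ_unit φ, by simp⟩
  | @insert a T _ _ ih =>
    obtain ⟨c, hc, hφc, hcT⟩ := ih fun p hp => hTφ p (Set.mem_insert_of_mem a hp)
    obtain ⟨ha, hφa⟩ := hTφ a (Set.mem_insert a T)
    obtain ⟨r, hcar, hφr⟩ := P.exists_op_eq_of_pure_of_succ hc ha hφc hφa
    refine ⟨r, P.pure_of_op_eq hc ha hcar, hφr, ?_⟩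
    rintro p (rfl | hp)
    · exact ⟨c, P.comm p c ▸ hcar⟩
    · exact P.succ_trans (hcT p hp) ⟨a, hcar⟩

end PCM

/-- Existence of the core: if for every state the set of pure states below it is finite,
then every state has a maximum pure part. -/
theorem core_exists {S : Type*} (P : PCM S)
    (hfin : ∀ φ : S, {p : S | P.pure p ∧ P.succ φ p}.Finite) :
    ∀ φ : S, ∃ c : S, P.pure c ∧ P.succ φ c ∧
      ∀ p : S, P.pure p → P.succ φ p → P.succ c p := fun φ =>
  (P.exists_pure_succ_forall_of_finite (hfin φ) fun _ hp => hp).imp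
    fun _ ⟨hc, hφc, hcT⟩ => ⟨hc, hφc, fun p hp hφp => hcT p ⟨hp, hφp⟩⟩
end

section
/- Characterization of monotonic assume statements: let (Σ, ⊕, u) be a partial commutative monoid and b an assertion. The following are equivalent: (1) for every set U ⊆ Σ, both mono(U) for the statement assume b and mono(U) for the statement assume ¬b hold; (2) for all states φ, φ' with φ' ⪰ φ and b(φ) ≠ Error, one has b(φ') = b(φ). -/
/-- An assertion is a function `S → Option Bool`: `some true` is ⊤, `some false` is ⊥,
and `none` is Error. -/
def negAssertion {S : Type*} (b : S → Option Bool) : S → Option Bool :=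
  fun φ => (b φ).map (fun v => !v)

/-- Verification of `assume b`: the assertion must be well-defined. -/
def assumeVer {S : Type*} (b : S → Option Bool) (φ : S) : Prop := b φ ≠ none

/-- Semantics of `assume b`: `{φ}` if `b` holds, `∅` if `b` is false. -/
def assumeSem {S : Type*} (b : S → Option Bool) (φ : S) : Set S :=
  if b φ = some true then {φ} else ∅

/-!
If `b` keeps its defined value on larger states, then `assume b` keeps both its verification
condition and its output `{φ}` or `∅`, and `φ₂ ⪰ φ₁` witnesses `{φ₂} ⪰ {φ₁}`. Conversely, take
the resource bound `{φ'}`: monotonicity of `assume b` forces `b φ' = ⊤ → b φ = ⊤`, since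
`{φ'}` cannot dominate `∅`, and that of `assume ¬b` forces `b φ' = ⊥ → b φ = ⊥`.
-/

namespace PCM

variable {S : Type*} (P : PCM S)

lemma succ_refl (a : S) : P.succ a a :=
  ⟨P.unit, by rw [P.comm]; exact P.unit_op a⟩

lemma mono_assume_of_preserved {b : S → Option Bool}
    (h : ∀ φ φ' : S, P.succ φ' φ → b φ ≠ none → b φ' = b φ) (U : Set S) :
    P.mono (assumeVer b) (assumeSem b) U := by
  intro φ₁ φ₂ _ h₂₁ hv
  have hb : b φ₂ = b φ₁ := h φ₁ φ₂ h₂₁ hv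
  refine ⟨by rwa [assumeVer, hb], fun a ha => ?_⟩
  by_cases ht : b φ₁ = some true
  · obtain rfl : a = φ₂ := by simpa [assumeSem, hb, ht] using ha
    exact ⟨φ₁, by simp [assumeSem, ht], h₂₁⟩
  · simp [assumeSem, hb, ht] at ha

lemma eq_true_of_mono_assume {b : S → Option Bool} {U : Set S}
    (hm : P.mono (assumeVer b) (assumeSem b) U) {φ φ' : S} (hU : ∃ φ₃ ∈ U, P.succ φ₃ φ')
    (h : P.succ φ' φ) (hv : b φ ≠ none) (ht : b φ' = some true) : b φ = some true := by
  by_contra hf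
  obtain ⟨x, hx, -⟩ := (hm φ φ' hU h hv).2 φ' (by simp [assumeSem, ht])
  simp [assumeSem, hf] at hx

end PCM

lemma negAssertion_ne_none_iff {S : Type*} {b : S → Option Bool} {φ : S} :
    negAssertion b φ ≠ none ↔ b φ ≠ none := by
  simp [negAssertion]

lemma negAssertion_eq_some_true_iff {S : Type*} {b : S → Option Bool} {φ : S} :
    negAssertion b φ = some true ↔ b φ = some false := by
  simp [negAssertion]

/-- Characterization of monotonic assume statements: `assume b` and `assume ¬b` are
bounded monotonic for every resource bound iff the value of `b`, when well-defined,
is preserved by growing the state. -/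
theorem assume_mono_characterization {S : Type*} (P : PCM S) (b : S → Option Bool) :
    (∀ U : Set S, P.mono (assumeVer b) (assumeSem b) U ∧
      P.mono (assumeVer (negAssertion b)) (assumeSem (negAssertion b)) U) ↔
    (∀ φ φ' : S, P.succ φ' φ → b φ ≠ none → b φ' = b φ) := by
  constructor
  · intro hmono φ φ' h hv
    obtain ⟨hm, hmNeg⟩ := hmono {φ'}
    have hU : ∃ φ₃ ∈ ({φ'} : Set S), P.succ φ₃ φ' := ⟨φ', rfl, P.succ_refl φ'⟩
    have hv' : b φ' ≠ none := (hm φ φ' hU h hv).1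
    obtain ⟨v, hbv⟩ := Option.ne_none_iff_exists'.mp hv'
    cases v
    · have := P.eq_true_of_mono_assume hmNeg hU h (negAssertion_ne_none_iff.mpr hv)
        (negAssertion_eq_some_true_iff.mpr hbv)
      rw [hbv, negAssertion_eq_some_true_iff.mp this]
    · rw [hbv, P.eq_true_of_mono_assume hm hU h hv hbv]
  · intro h U
    refine ⟨P.mono_assume_of_preserved h U, P.mono_assume_of_preserved (fun φ φ' hs hn => ?_) U⟩
    simp only [negAssertion, h φ φ' hs (negAssertion_ne_none_iff.mp hn)]
end
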